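/- arXiv:2411.10904 — 3 statements merged into one kernel-verified Lean document; each statement's English description precedes it below -/
import Mathlib

section
/- A vector c ∈ ℤⁿ is a coloring vector if and only if: (1) -i+1 ≤ c_i ≤ i for all i; (2) for all i ∈ {2,…,n} there exists j ∈ {1,…,i-1} with c_i ≤ 1 + c_j; and (3) for all i ∈ {2,…,n}, either c_i ≥ 0 or c_i ∈ {-c₁,…,-c_{i-1}}. -/
/-- The maximum of `c₁,…,c_{i-1}` (0-indexed: `c 0, …, c (i-1)`), for `i > 0`. -/
def maxBelow {n : ℕ} (c : Fin n → ℤ) (i : Fin n) (hi : 0 < i.val) : ℤ :=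
  (Finset.Iio i).sup' ⟨⟨0, lt_of_le_of_lt (Nat.zero_le _) i.isLt⟩, Finset.mem_Iio.mpr hi⟩ c

/-- `c` is a coloring vector: the first component is 0 or 1, and each later component
satisfies `-mᵢ ≤ cᵢ ≤ 1 + mᵢ` where `mᵢ` is the max of the preceding components. -/
def IsColoringVec {n : ℕ} (c : Fin n → ℤ) : Prop :=
  (∀ h0 : 0 < n, c ⟨0, h0⟩ = 0 ∨ c ⟨0, h0⟩ = 1) ∧
  ∀ (i : Fin n) (hi : 0 < i.val), -maxBelow c i hi ≤ c i ∧ c i ≤ 1 + maxBelow c i hi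

lemma le_maxBelow {n : ℕ} (c : Fin n → ℤ) {i j : Fin n} (hi : 0 < i.val) (hj : j < i) :
    c j ≤ maxBelow c i hi :=
  Finset.le_sup' c (Finset.mem_Iio.mpr hj)

lemma exists_eq_maxBelow {n : ℕ} (c : Fin n → ℤ) (i : Fin n) (hi : 0 < i.val) :
    ∃ j : Fin n, j < i ∧ c j = maxBelow c i hi := by
  obtain ⟨j, hj, hje⟩ := Finset.exists_mem_eq_sup'
    (⟨⟨0, lt_of_le_of_lt (Nat.zero_le _) i.isLt⟩, Finset.mem_Iio.mpr hi⟩ :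
      (Finset.Iio i).Nonempty) c
  exact ⟨j, Finset.mem_Iio.mp hj, hje.symm⟩

lemma maxBelow_le {n : ℕ} (c : Fin n → ℤ) (i : Fin n) (hi : 0 < i.val) {a : ℤ}
    (h : ∀ j : Fin n, j < i → c j ≤ a) : maxBelow c i hi ≤ a :=
  Finset.sup'_le _ _ fun j hj => h j (Finset.mem_Iio.mp hj)

lemma bound_of_coloring {n : ℕ} (c : Fin n → ℤ) (h : IsColoringVec c) :
    ∀ k : ℕ, ∀ i : Fin n, i.val = k → -(i.val : ℤ) ≤ c i ∧ c i ≤ (i.val : ℤ) + 1 := by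
  intro k
  induction k using Nat.strong_induction_on with
  | _ k IH =>
    intro i hik
    rcases Nat.eq_zero_or_pos i.val with h0 | hpos
    · have hn : 0 < n := lt_of_le_of_lt (Nat.zero_le _) i.isLt
      have : i = ⟨0, hn⟩ := Fin.ext h0
      rcases h.1 hn with he | he <;> rw [this] <;> simp [he, h0]
    · have hm : maxBelow c i hpos ≤ (i.val : ℤ) := by
        apply maxBelow_le
        intro j hj
        have := (IH j.val (hik ▸ hj) j rfl).2
        have hji : (j.val : ℤ) + 1 ≤ (i.val : ℤ) := by exact_mod_cast hj
        linarith
      obtain ⟨hl, hu⟩ := h.2 i hpos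
      constructor <;> linarith

lemma attained_of_coloring {n : ℕ} (c : Fin n → ℤ) (h : IsColoringVec c) :
    ∀ k : ℕ, ∀ i : Fin n, i.val = k → ∀ hi : 0 < i.val, ∀ v : ℤ, 1 ≤ v →
      v ≤ maxBelow c i hi → ∃ j : Fin n, j < i ∧ c j = v := by
  intro k
  induction k using Nat.strong_induction_on with
  | _ k IH =>
    intro i hik hi v hv1 hvm
    obtain ⟨j, hji, hje⟩ := exists_eq_maxBelow c i hi
    rcases eq_or_lt_of_le hvm with heq | hlt
    · exact ⟨j, hji, hje.trans heq.symm⟩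
    · have hvj : v < c j := hje ▸ hlt
      rcases Nat.eq_zero_or_pos j.val with hj0 | hjpos
      · have hn : 0 < n := lt_of_le_of_lt (Nat.zero_le _) j.isLt
        have hj : j = ⟨0, hn⟩ := Fin.ext hj0
        rcases h.1 hn with he | he <;> rw [hj, he] at hvj <;> omega
      · have h2 := (h.2 j hjpos).2
        have hvm' : v ≤ maxBelow c j hjpos := by linarith
        obtain ⟨j', hj', hcj'⟩ := IH j.val (hik ▸ hji) j rfl hjpos v hv1 hvm'
        exact ⟨j', lt_trans hj' hji, hcj'⟩

/-- Alternative characterization of coloring vectors: `c` is a coloring vector iff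
(1) `-i+1 ≤ cᵢ ≤ i` for all `i`; (2) for each `i ≥ 2` there is `j < i` with
`cᵢ ≤ 1 + c_j`; (3) for each `i ≥ 2`, either `cᵢ ≥ 0` or `cᵢ = -c_j` for some `j < i`. -/
theorem isColoringVec_iff {n : ℕ} (c : Fin n → ℤ) :
    IsColoringVec c ↔
      ((∀ i : Fin n, -(i.val : ℤ) ≤ c i ∧ c i ≤ (i.val : ℤ) + 1) ∧
       (∀ i : Fin n, 0 < i.val → ∃ j : Fin n, j < i ∧ c i ≤ 1 + c j) ∧
       (∀ i : Fin n, 0 < i.val → 0 ≤ c i ∨ ∃ j : Fin n, j < i ∧ c i = -c j)) := by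
  constructor
  · intro h
    refine ⟨fun i => bound_of_coloring c h i.val i rfl, fun i hi => ?_, fun i hi => ?_⟩
    · obtain ⟨j, hji, hje⟩ := exists_eq_maxBelow c i hi
      exact ⟨j, hji, by rw [hje]; exact (h.2 i hi).2⟩
    · rcases le_or_gt 0 (c i) with hpos | hneg
      · exact Or.inl hpos
      · have hl := (h.2 i hi).1
        obtain ⟨j, hji, hje⟩ := attained_of_coloring c h i.val i rfl hi (-c i)
          (by linarith) (by linarith)
        exact Or.inr ⟨j, hji, by linarith⟩
  · rintro ⟨h1, h2, h3⟩
    constructor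
    · intro h0
      obtain ⟨ha, hb⟩ := h1 ⟨0, h0⟩
      simp at ha hb
      omega
    · intro i hi
      have hzi : (⟨0, lt_of_le_of_lt (Nat.zero_le _) i.isLt⟩ : Fin n) < i := hi
      have hz : (0 : ℤ) ≤ c ⟨0, lt_of_le_of_lt (Nat.zero_le _) i.isLt⟩ := by
        have := (h1 ⟨0, lt_of_le_of_lt (Nat.zero_le _) i.isLt⟩).1
        simpa using this
      have hm0 : (0 : ℤ) ≤ maxBelow c i hi := le_trans hz (le_maxBelow c hi hzi)
      constructor
      · rcases h3 i hi with hp | ⟨j, hji, hje⟩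
        · linarith
        · have := le_maxBelow c hi hji
          linarith
      · obtain ⟨j, hji, hje⟩ := h2 i hi
        have := le_maxBelow c hi hji
        linarith
end

section
/- Let c ∈ ℤⁿ be a coloring vector with color set K_c := {|c_i| : 1 ≤ i ≤ n} \ {0}. For k ∈ K_c define b^(k) ∈ ℝⁿ by b^(k)_i := δ_k(c_i), where δ_k(j) = 1 if j = k, -1 if j = -k, and 0 otherwise. Then {b^(k) : k ∈ K_c} is a basis for the polydiagonal subspace Δ_c, and in particular dim Δ_c = |K_c|. -/
/-- The polydiagonal subspace `Δ_c` of `ℝⁿ` associated to `c ∈ ℤⁿ`. -/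
def DeltaSub {n : ℕ} (c : Fin n → ℤ) : Submodule ℝ (Fin n → ℝ) where
  carrier := {x | ∀ i j : Fin n, (c i = c j → x i = x j) ∧ (c i = -c j → x i = -x j)}
  zero_mem' := by intro i j; simp
  add_mem' := by
    intro a b ha hb i j
    refine ⟨fun h => ?_, fun h => ?_⟩
    · simp [Pi.add_apply, (ha i j).1 h, (hb i j).1 h]
    · simp only [Pi.add_apply, (ha i j).2 h, (hb i j).2 h]; ring
  smul_mem' := by
    intro r a ha i j
    refine ⟨fun h => ?_, fun h => ?_⟩
    · simp [Pi.smul_apply, (ha i j).1 h]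
    · simp only [Pi.smul_apply, (ha i j).2 h, smul_eq_mul]; ring

/-- The set of colors of `c`: the nonzero absolute values of its components. -/
def Kc {n : ℕ} (c : Fin n → ℤ) : Finset ℤ := (Finset.univ.image fun i => |c i|).erase 0

/-- The basis vector `b⁽ᵏ⁾` with `b⁽ᵏ⁾ᵢ = δ_k(cᵢ)`. -/
def bvec {n : ℕ} (c : Fin n → ℤ) (k : ℤ) : Fin n → ℝ :=
  fun i => if c i = k then 1 else if c i = -k then -1 else 0

/-!
A coloring vector attains every color `k ∈ K_c` with its positive sign: a negative entry
`c i = -k` is bounded below by `-c j` for some earlier `j`, and the bound `c i ≤ 1 + m_i` means the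
positive values of `c` climb without gaps, so `k ≤ c j` is attained too. Picking such a
representative `j_k` for each color, `b⁽ᵏ⁾` is `1` at `j_k` and the other `b⁽ᵏ'⁾` vanish there,
which gives linear independence; and a vector of `Δ_c` is determined by its values at the `j_k`,
so `dim Δ_c ≤ |K_c|`.
-/

namespace IsColoringVec

variable {n : ℕ} {c : Fin n → ℤ}

lemma eq_zero_or_eq_one (hc : IsColoringVec c) {i : Fin n} (hi : i.val = 0) :
    c i = 0 ∨ c i = 1 := by
  obtain ⟨i, hin⟩ := i
  obtain rfl : i = 0 := hi
  exact hc.1 hin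

lemma exists_lt_bounds (hc : IsColoringVec c) {i : Fin n} (hi : 0 < i.val) :
    ∃ j < i, -c j ≤ c i ∧ c i ≤ 1 + c j := by
  obtain ⟨j, hj, hmax⟩ := Finset.exists_mem_eq_sup' (s := Finset.Iio i)
    ⟨⟨0, i.pos⟩, Finset.mem_Iio.mpr hi⟩ c
  refine ⟨j, Finset.mem_Iio.mp hj, ?_⟩
  rw [← hmax]
  exact hc.2 i hi

lemma exists_eq_of_le (hc : IsColoringVec c) (i : Fin n) {t : ℤ} (ht : 1 ≤ t) (hti : t ≤ c i) :
    ∃ j, c j = t := by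
  induction i using WellFoundedLT.induction with
  | _ i ih =>
    rcases hti.eq_or_lt with heq | hlt
    · exact ⟨i, heq.symm⟩
    have hi : 0 < i.val := by
      by_contra h
      rcases hc.eq_zero_or_eq_one (Nat.eq_zero_of_not_pos h) with h0 | h0 <;> omega
    obtain ⟨j, hji, -, hj⟩ := hc.exists_lt_bounds hi
    exact ih j hji (by omega)

lemma exists_eq_of_mem_Kc (hc : IsColoringVec c) {k : ℤ} (hk : k ∈ Kc c) : ∃ j, c j = k := by
  obtain ⟨hk0, hk⟩ := Finset.mem_erase.mp hk
  obtain ⟨i, -, rfl⟩ := Finset.mem_image.mp hk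
  rcases abs_cases (c i) with ⟨habs, -⟩ | ⟨habs, hneg⟩
  · exact ⟨i, habs.symm⟩
  have hi : 0 < i.val := by
    by_contra h
    rcases hc.eq_zero_or_eq_one (Nat.eq_zero_of_not_pos h) with h0 | h0 <;> omega
  obtain ⟨j, -, hj, -⟩ := hc.exists_lt_bounds hi
  exact hc.exists_eq_of_le j (by omega) (by omega)

end IsColoringVec

section Polydiagonal

variable {n : ℕ} {c : Fin n → ℤ}

lemma pos_of_mem_Kc {k : ℤ} (hk : k ∈ Kc c) : 0 < k := by
  obtain ⟨hk0, hk⟩ := Finset.mem_erase.mp hk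
  obtain ⟨i, -, rfl⟩ := Finset.mem_image.mp hk
  exact (abs_nonneg _).lt_of_ne' hk0

lemma abs_mem_Kc {i : Fin n} (hi : c i ≠ 0) : |c i| ∈ Kc c :=
  Finset.mem_erase.mpr ⟨abs_ne_zero.mpr hi, Finset.mem_image_of_mem _ (Finset.mem_univ i)⟩

lemma bvec_apply_of_abs_ne {k : ℤ} (hk : 0 ≤ k) {i : Fin n} (h : |c i| ≠ k) :
    bvec c k i = 0 := by
  have h₁ : c i ≠ k := fun he => h (by rw [he, abs_of_nonneg hk])
  have h₂ : c i ≠ -k := fun he => h (by rw [he, abs_neg, abs_of_nonneg hk])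
  simp [bvec, h₁, h₂]

lemma bvec_mem_DeltaSub {k : ℤ} (hk : k ≠ 0) : bvec c k ∈ DeltaSub c := by
  intro i j
  refine ⟨fun h => by simp [bvec, h], fun h => ?_⟩
  simp only [bvec]
  split_ifs <;> first | omega | norm_num

lemma span_bvec_le_DeltaSub :
    Submodule.span ℝ (Set.range fun k : Kc c => bvec c k.1) ≤ DeltaSub c := by
  rw [Submodule.span_le]
  rintro _ ⟨k, rfl⟩
  exact bvec_mem_DeltaSub (pos_of_mem_Kc k.2).ne'

variable {rep : Kc c → Fin n} (hrep : ∀ k, c (rep k) = k)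
include hrep

lemma linearIndependent_bvec : LinearIndependent ℝ (fun k : Kc c => bvec c k.1) := by
  -- Evaluating at the representatives turns the family into the standard basis of `Kc c → ℝ`.
  refine .of_comp (LinearMap.funLeft ℝ ℝ rep) ?_
  convert (Pi.basisFun ℝ (Kc c)).linearIndependent using 1
  ext k k'
  rw [Function.comp_apply, LinearMap.funLeft_apply, Pi.basisFun_apply]
  by_cases hkk : k = k'
  · subst hkk
    simp [bvec, hrep]
  · rw [Pi.single_eq_of_ne' hkk, bvec_apply_of_abs_ne (pos_of_mem_Kc k.2).le]
    rw [hrep, abs_of_pos (pos_of_mem_Kc k'.2)]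
    exact fun h => hkk (Subtype.ext h.symm)

lemma eq_zero_of_mem_DeltaSub {x : Fin n → ℝ} (hx : x ∈ DeltaSub c)
    (hzero : ∀ k, x (rep k) = 0) : x = 0 := by
  funext i
  by_cases hi : c i = 0
  · have := (hx i i).2 (by omega)
    simp only [Pi.zero_apply]
    linarith
  set k : Kc c := ⟨_, abs_mem_Kc hi⟩
  have hk : c (rep k) = |c i| := hrep k
  rcases abs_cases (c i) with ⟨habs, -⟩ | ⟨habs, -⟩
  · rw [(hx i (rep k)).1 (by omega), hzero, Pi.zero_apply]
  · rw [(hx i (rep k)).2 (by omega), hzero, Pi.zero_apply, neg_zero]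

lemma finrank_DeltaSub_le : Module.finrank ℝ (DeltaSub c) ≤ (Kc c).card := by
  let restrict : DeltaSub c →ₗ[ℝ] (Kc c → ℝ) := LinearMap.funLeft ℝ ℝ rep ∘ₗ (DeltaSub c).subtype
  have hinj : Function.Injective restrict := by
    rw [← LinearMap.ker_eq_bot, Submodule.eq_bot_iff]
    intro x hx
    rw [Submodule.mk_eq_zero]
    exact eq_zero_of_mem_DeltaSub hrep x.2 (congrFun hx)
  simpa using LinearMap.finrank_le_finrank_of_injective hinj

end Polydiagonal

/-- `{b⁽ᵏ⁾ : k ∈ K_c}` is a basis of `Δ_c`; in particular `dim Δ_c = |K_c|`. -/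
theorem bvec_basis {n : ℕ} (c : Fin n → ℤ) (hc : IsColoringVec c) :
    LinearIndependent ℝ (fun k : (Kc c) => bvec c k.1) ∧
    Submodule.span ℝ (Set.range fun k : (Kc c) => bvec c k.1) = DeltaSub c ∧
    Module.finrank ℝ (DeltaSub c) = (Kc c).card := by
  choose rep hrep using fun k : Kc c => hc.exists_eq_of_mem_Kc k.2
  have hli := linearIndependent_bvec hrep
  have hspan : Submodule.span ℝ (Set.range fun k : Kc c => bvec c k.1) = DeltaSub c :=
    Submodule.eq_of_le_of_finrank_le span_bvec_le_DeltaSub <| by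
      rw [finrank_span_eq_card hli, Fintype.card_coe]
      exact finrank_DeltaSub_le hrep
  refine ⟨hli, hspan, ?_⟩
  rw [← hspan, finrank_span_eq_card hli, Fintype.card_coe]
end

section
/- The map c ↦ Δ_c from coloring vectors in ℤⁿ to polydiagonal subspaces of ℝⁿ is injective: distinct coloring vectors give distinct subspaces. -/
/-- The polydiagonal subspace of `c`, as a subset of `ℝⁿ`. -/
def DeltaSet {n : ℕ} (c : Fin n → ℤ) : Set (Fin n → ℝ) :=
  {x | ∀ i j : Fin n, (c i = c j → x i = x j) ∧ (c i = -c j → x i = -x j)}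

/-!
The signed partition of the coordinates encoded by `c` (which coordinates are equal, which are
opposite) can be read off `Δ_c`, since the vector `c` itself lies in `Δ_c`. Conversely, a coloring
vector is determined by its signed partition: scanning left to right, an entry either repeats an
earlier entry up to sign, or is `0`, or is a new colour. A new colour must be `1 + mᵢ`, because every
value in `(0, mᵢ]` has already occurred up to sign, which follows by induction from the bound
`cᵢ ≤ 1 + mᵢ`.
-/

open Finset

section

variable {n : ℕ}

def SameSignedPattern (c₁ c₂ : Fin n → ℤ) : Prop :=
  ∀ i j : Fin n, (c₁ i = c₁ j ↔ c₂ i = c₂ j) ∧ (c₁ i = -c₁ j ↔ c₂ i = -c₂ j)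

namespace SameSignedPattern

variable {c₁ c₂ : Fin n → ℤ}

theorem eq_zero_iff (hp : SameSignedPattern c₁ c₂) (i : Fin n) : c₁ i = 0 ↔ c₂ i = 0 := by
  have := (hp i i).2
  omega

end SameSignedPattern

theorem cast_mem_deltaSet (c : Fin n → ℤ) : ((↑) ∘ c : Fin n → ℝ) ∈ DeltaSet c :=
  fun i j => ⟨fun h => by simp [h], fun h => by simp [h]⟩

theorem eq_and_eq_neg_of_deltaSet_subset {c₁ c₂ : Fin n → ℤ} (h : DeltaSet c₁ ⊆ DeltaSet c₂)
    (i j : Fin n) :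
    (c₂ i = c₂ j → c₁ i = c₁ j) ∧ (c₂ i = -c₂ j → c₁ i = -c₁ j) := by
  have hmem := h (cast_mem_deltaSet c₁) i j
  simp only [Function.comp_apply] at hmem
  exact_mod_cast hmem

theorem sameSignedPattern_of_deltaSet_eq {c₁ c₂ : Fin n → ℤ} (h : DeltaSet c₁ = DeltaSet c₂) :
    SameSignedPattern c₁ c₂ := fun i j =>
  have h₁₂ := eq_and_eq_neg_of_deltaSet_subset h.le i j
  have h₂₁ := eq_and_eq_neg_of_deltaSet_subset h.ge i j
  ⟨⟨h₂₁.1, h₁₂.1⟩, ⟨h₂₁.2, h₁₂.2⟩⟩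

theorem exists_lt_eq_maxBelow (c : Fin n → ℤ) (i : Fin n) (hi : 0 < i.val) :
    ∃ j < i, c j = maxBelow c i hi := by
  obtain ⟨j, hj, h⟩ := exists_mem_eq_sup' _ c
  exact ⟨j, mem_Iio.mp hj, h.symm⟩

theorem maxBelow_congr {c₁ c₂ : Fin n → ℤ} (i : Fin n) (hi : 0 < i.val)
    (h : ∀ j < i, c₁ j = c₂ j) : maxBelow c₁ i hi = maxBelow c₂ i hi :=
  sup'_congr _ rfl fun j hj => h j (mem_Iio.mp hj)

namespace IsColoringVec

variable {c : Fin n → ℤ}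

theorem pos_of_two_le (hc : IsColoringVec c) {j : Fin n} (hj : 2 ≤ c j) : 0 < j.val := by
  obtain ⟨_ | k, hk⟩ := j
  · rcases hc.1 hk with h | h <;> omega
  · exact k.succ_pos

theorem exists_lt_abs_eq (hc : IsColoringVec c) (i : Fin n) (hi : 0 < i.val) (v : ℤ)
    (hv : 0 < v) (hvm : v ≤ maxBelow c i hi) : ∃ j < i, |c j| = v := by
  induction i using WellFoundedLT.induction with
  | _ i IH =>
  obtain ⟨k, hki, hk⟩ := exists_lt_eq_maxBelow c i hi
  rcases hvm.eq_or_lt with rfl | hlt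
  · exact ⟨k, hki, by rw [hk, abs_of_pos hv]⟩
  have hk0 : 0 < k.val := hc.pos_of_two_le (by omega)
  have hvk : v ≤ maxBelow c k hk0 := by linarith [(hc.2 k hk0).2]
  obtain ⟨j, hjk, hj⟩ := IH k hki hk0 hvk
  exact ⟨j, hjk.trans hki, hj⟩

theorem eq_one_add_maxBelow_of_new (hc : IsColoringVec c) (i : Fin n) (hi : 0 < i.val)
    (h0 : c i ≠ 0) (hnew : ∀ j < i, c i ≠ c j ∧ c i ≠ -c j) : c i = 1 + maxBelow c i hi := by
  by_contra hne
  have hle : |c i| ≤ maxBelow c i hi := abs_le.mpr (by have := hc.2 i hi; omega)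
  obtain ⟨j, hji, hj⟩ := hc.exists_lt_abs_eq i hi _ (abs_pos.mpr h0) hle
  rcases abs_eq_abs.mp hj with h | h
  · exact (hnew j hji).1 h.symm
  · exact (hnew j hji).2 (by omega)

theorem eq_of_eq_of_lt {c₁ c₂ : Fin n → ℤ} (h₁ : IsColoringVec c₁) (h₂ : IsColoringVec c₂)
    (hp : SameSignedPattern c₁ c₂) (i : Fin n) (hi : 0 < i.val) (hlt : ∀ j < i, c₁ j = c₂ j) :
    c₁ i = c₂ i := by
  by_cases hrepeat : ∃ j < i, c₁ i = c₁ j ∨ c₁ i = -c₁ j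
  · obtain ⟨j, hji, h | h⟩ := hrepeat
    · rw [h, hlt j hji, (hp i j).1.mp h]
    · rw [h, hlt j hji, (hp i j).2.mp h]
  have hnew₁ : ∀ j < i, c₁ i ≠ c₁ j ∧ c₁ i ≠ -c₁ j := fun j hji =>
    not_or.mp fun h => hrepeat ⟨j, hji, h⟩
  by_cases h0 : c₁ i = 0
  · rw [h0, (hp.eq_zero_iff i).mp h0]
  have hnew₂ : ∀ j < i, c₂ i ≠ c₂ j ∧ c₂ i ≠ -c₂ j := fun j hji =>
    ⟨mt (hp i j).1.mpr (hnew₁ j hji).1, mt (hp i j).2.mpr (hnew₁ j hji).2⟩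
  rw [h₁.eq_one_add_maxBelow_of_new i hi h0 hnew₁,
    h₂.eq_one_add_maxBelow_of_new i hi (mt (hp.eq_zero_iff i).mpr h0) hnew₂,
    maxBelow_congr i hi hlt]

end IsColoringVec

end

/-- The map `c ↦ Δ_c` is injective on coloring vectors. -/
theorem deltaSet_injective {n : ℕ} (c₁ c₂ : Fin n → ℤ)
    (h₁ : IsColoringVec c₁) (h₂ : IsColoringVec c₂)
    (h : DeltaSet c₁ = DeltaSet c₂) : c₁ = c₂ := by
  have hp := sameSignedPattern_of_deltaSet_eq h
  funext i
  induction i using WellFoundedLT.induction with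
  | _ i IH =>
  obtain ⟨_ | k, hk⟩ := i
  · have := hp.eq_zero_iff ⟨0, hk⟩
    rcases h₁.1 hk with h | h <;> rcases h₂.1 hk with h' | h' <;> omega
  · exact h₁.eq_of_eq_of_lt h₂ hp _ k.succ_pos IH
end
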